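/- For every 1-isolator φ for S5[Con,Ground], there exist a model (W,V) whose variable assignment satisfies the Con and Ground constraints and a world w ∈ W such that W,w ⊩_V φ. -/

import Mathlib

namespace KripkeModal

/-- Formulas of the modal language `L_□`: atoms `T(x)`, `F(x)` for variables
`x : ℕ`, negation, conjunction, and box. -/
inductive Fml : Type
  | tt : ℕ → Fml   -- T(x)
  | ff : ℕ → Fml   -- F(x)
  | neg : Fml → Fml
  | and : Fml → Fml → Fml
  | box : Fml → Fml
deriving DecidableEq

namespace Fml

/-- Material implication, defined from `¬, ∧`. -/
def imp (φ ψ : Fml) : Fml := neg (and φ (neg ψ))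

/-- Disjunction, defined from `¬, ∧`. -/
def or (φ ψ : Fml) : Fml := neg (and (neg φ) (neg ψ))

/-- Biconditional. -/
def iff (φ ψ : Fml) : Fml := and (imp φ ψ) (imp ψ φ)

/-- Diamond: `◇φ := ¬□¬φ`. -/
def dia (φ : Fml) : Fml := neg (box (neg φ))

/-- `N(x) := ¬T(x) ∧ ¬F(x)`. -/
def Nf (x : ℕ) : Fml := and (neg (tt x)) (neg (ff x))

/-- A fixed contradiction. -/
def bot : Fml := and (tt 0) (neg (tt 0))

end Fml

open Fml

/-- Evaluate a formula propositionally under a valuation `v` of the "atoms":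
the atomic formulas `T(x)`, `F(x)` and all boxed formulas are treated as
propositional atoms. -/
def evalProp (v : Fml → Bool) : Fml → Bool
  | Fml.neg φ => !(evalProp v φ)
  | Fml.and φ ψ => evalProp v φ && evalProp v ψ
  | φ => v φ

/-- A formula is a substitution instance of a classical propositional tautology
iff it evaluates to true under every propositional valuation of its atoms. -/
def Tautology (φ : Fml) : Prop := ∀ v : Fml → Bool, evalProp v φ = true

/-- Provability in the modal system `S5[Ax]`: the smallest set of formulas
containing all substitution instances of propositional tautologies, all
instances of K, T and 5, all formulas in `Ax`, closed under modus ponens and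
necessitation.  Taking `Ax = ∅` gives `S5` itself. -/
inductive Prv (Ax : Set Fml) : Fml → Prop
  | taut {φ} : Tautology φ → Prv Ax φ
  | axK (A B : Fml) : Prv Ax (imp (box (imp A B)) (imp (box A) (box B)))
  | axT (A : Fml) : Prv Ax (imp (box A) A)
  | ax5 (A : Fml) : Prv Ax (imp (dia A) (box (dia A)))
  | axm {φ} : φ ∈ Ax → Prv Ax φ
  | mp {A B} : Prv Ax (imp A B) → Prv Ax A → Prv Ax B
  | nec {A} : Prv Ax A → Prv Ax (box A)

/-- A system is consistent if it does not prove a contradiction. -/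
def Consistent (Ax : Set Fml) : Prop := ¬ Prv Ax Fml.bot

/-- The axiom schema `Con`: `¬(T(x) ∧ F(x))`. -/
def ConAx : Set Fml := { φ | ∃ x : ℕ, φ = neg (and (tt x) (ff x)) }

/-- The axiom schema `Ground`: `(◇T(x) ∧ ◇F(x)) → ◇N(x)`. -/
def GroundAx : Set Fml :=
  { φ | ∃ x : ℕ, φ = imp (and (dia (tt x)) (dia (ff x))) (dia (Nf x)) }

/-- Conjunction of a list of formulas (empty conjunction is `¬⊥`). -/
def bigAnd : List Fml → Fml
  | [] => Fml.neg Fml.bot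
  | [φ] => φ
  | φ :: ψ :: rest => Fml.and φ (bigAnd (ψ :: rest))

/-- Disjunction of a list of formulas (the empty disjunction is the fixed
contradiction `⊥`). -/
def bigOr : List Fml → Fml
  | [] => Fml.bot
  | [φ] => φ
  | φ :: ψ :: rest => Fml.or φ (bigOr (ψ :: rest))

/-- The axiom schema `Min_n`: all instances
`(◇N(x_1) ∧ … ∧ ◇N(x_n)) → ◇(N(x_1) ∧ … ∧ N(x_n))` obtained by substituting
arbitrary (not necessarily distinct) variables for `x_1, …, x_n`. -/
def MinAx (n : ℕ) : Set Fml :=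
  { φ | ∃ l : List ℕ, l.length = n ∧
      φ = imp (bigAnd (l.map (fun x => dia (Nf x)))) (dia (bigAnd (l.map Nf))) }

/-- A formula is extensional if it contains no `□`. -/
def Extensional : Fml → Prop
  | tt _ => True
  | ff _ => True
  | Fml.neg φ => Extensional φ
  | Fml.and φ ψ => Extensional φ ∧ Extensional ψ
  | box _ => False

/-- A formula is intensional if every atomic subformula occurs within the
scope of a `□`. -/
def Intensional : Fml → Prop
  | tt _ => False
  | ff _ => False
  | Fml.neg φ => Intensional φ
  | Fml.and φ ψ => Intensional φ ∧ Intensional ψ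
  | box _ => True

/-- The set of variables occurring in a formula. -/
def vars : Fml → Set ℕ
  | tt x => {x}
  | ff x => {x}
  | Fml.neg φ => vars φ
  | Fml.and φ ψ => vars φ ∪ vars ψ
  | box φ => vars φ

/-- An `n`-formula: one whose atoms use only the variables `x_1, …, x_n`. -/
def IsNFormula (n : ℕ) (φ : Fml) : Prop := vars φ ⊆ {x | 1 ≤ x ∧ x ≤ n}

/-- A 1-formula: one whose atoms use only the single variable `x_1`. -/
abbrev Is1Formula (φ : Fml) : Prop := IsNFormula 1 φ

/-- `φ` is `Γ`-maximal for the system `S5[Ax]`. -/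
def GammaMaximal (Ax : Set Fml) (Γ : Set Fml) (φ : Fml) : Prop :=
  Consistent (Ax ∪ {φ}) ∧ φ ∈ Γ ∧
    ∀ ψ ∈ Γ, Prv Ax (imp φ ψ) ∨ Prv Ax (imp φ (neg ψ))

/-- Extensional `n`-isolators for `S5[Ax]`. -/
def ExtIsolator (n : ℕ) (Ax : Set Fml) (φ : Fml) : Prop :=
  GammaMaximal Ax {ψ | Extensional ψ ∧ IsNFormula n ψ} φ

/-- Intensional `n`-isolators for `S5[Ax]`. -/
def IntIsolator (n : ℕ) (Ax : Set Fml) (φ : Fml) : Prop :=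
  GammaMaximal Ax {ψ | Intensional ψ ∧ IsNFormula n ψ} φ

/-- An `n`-isolator for `S5[Ax]`: a consistent conjunction `ε ∧ ι` of an
extensional `n`-isolator and an intensional `n`-isolator. -/
def Isolator (n : ℕ) (Ax : Set Fml) (φ : Fml) : Prop :=
  ∃ ε ι, ExtIsolator n Ax ε ∧ IntIsolator n Ax ι ∧
    φ = Fml.and ε ι ∧ Consistent (Ax ∪ {φ})

/-- Satisfaction in a model `(W, V)` (with `V = (V1, V2)`) at a world `w`. -/
def Sat {W : Type*} (V1 V2 : ℕ → Set W) : W → Fml → Prop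
  | w, tt x => w ∈ V1 x
  | w, ff x => w ∈ V2 x
  | w, Fml.neg φ => ¬ Sat V1 V2 w φ
  | w, Fml.and φ ψ => Sat V1 V2 w φ ∧ Sat V1 V2 w ψ
  | _, box φ => ∀ v, Sat V1 V2 v φ

/-- The variable assignment satisfies the `Con` constraint. -/
def ConC {W : Type*} (V1 V2 : ℕ → Set W) : Prop := ∀ x, V1 x ∩ V2 x = ∅

/-- The variable assignment satisfies the `Ground` constraint. -/
def GroundC {W : Type*} (V1 V2 : ℕ → Set W) : Prop :=
  ∀ x, (V1 x).Nonempty → (V2 x).Nonempty → ((V1 x ∪ V2 x)ᶜ : Set W).Nonempty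

/-- The variable assignment satisfies the `Min` constraint. -/
def MinC {W : Type*} (V1 V2 : ℕ → Set W) : Prop :=
  ∀ l : List ℕ, l ≠ [] → (∀ x ∈ l, ((V1 x ∪ V2 x)ᶜ : Set W).Nonempty) →
    (⋂ x ∈ l, ((V1 x ∪ V2 x)ᶜ : Set W)).Nonempty

/-- The prime conditions for a subset `S` of the tensor `[3]^n`, realized as
`Fin n → Fin 3` where the value `0` stands for the layer `T`, `1` for `F`,
and `2` for `N` (i.e. `1, 2, 3` in the paper's numbering). -/
def PrimeConditions (n : ℕ) (S : Set (Fin n → Fin 3)) : Prop :=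
  S.Nonempty ∧
  (∀ j : Fin n, (S ∩ {a | a j = 0}).Nonempty → (S ∩ {a | a j = 1}).Nonempty →
      (S ∩ {a | a j = 2}).Nonempty) ∧
  ∀ J : Set (Fin n), J.Nonempty →
    (∀ j ∈ J, (S ∩ {a | a j = 2}).Nonempty) →
    (S ∩ ⋂ j ∈ J, {a | a j = 2}).Nonempty

/-- `χ_1 = T`, `χ_2 = F`, `χ_3 = N` (with `Fin 3` values `0, 1, 2`). -/
def chi (k : Fin 3) (x : ℕ) : Fml :=
  if k = 0 then tt x else if k = 1 then ff x else Nf x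

/-- The extensional `n`-isolator `φ_a = χ_{a_1}(x_1) ∧ … ∧ χ_{a_n}(x_n)`
associated with a tuple `a ∈ [3]^n`. -/
def tupleFml {n : ℕ} (a : Fin n → Fin 3) : Fml :=
  bigAnd ((List.finRange n).map (fun i => chi (a i) (i.1 + 1)))

open Classical in
/-- The pre-`n`-isolator of `S ⊆ [3]^n`:
`⋀_{a ∈ S} ◇φ_a ∧ ⋀_{a ∉ S} ¬◇φ_a`. -/
noncomputable def preIsolator (n : ℕ) (S : Set (Fin n → Fin 3)) : Fml :=
  bigAnd (((Finset.univ : Finset (Fin n → Fin 3)).toList).map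
    (fun a => if a ∈ S then dia (tupleFml a) else Fml.neg (dia (tupleFml a))))

/-!
A 1-formula sees only the layer (`T`, `F` or `N`) of `x₁` at the current world and the set `S`
of layers realised somewhere. The extensional isolator `ε` fixes the current layer `e`; the
intensional isolator `ι` fixes `S` through the literals `±◇χ_k(x₁)`, whose conjunction is `ψ_S`.
Consistency forces `e ∈ S`, and Ground forces `N ∈ S` whenever `T, F ∈ S`. In the model whose
worlds are the layers in `S`, a truth lemma shows that `χ_e ∧ ψ_S` proves every 1-formula true
at `e` and refutes every one false there; its modal step rests on `ψ_S → □ψ_S`, an instance of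
4 and 5. Since `ε ∧ ι` proves `χ_e ∧ ψ_S` and is consistent, it is true at `e`.
-/

namespace Prv

variable {Ax : Set Fml} {A B C X : Fml}

theorem mono {Ax' : Set Fml} (hAx : Ax ⊆ Ax') (h : Prv Ax A) : Prv Ax' A := by
  induction h with
  | taut t => exact taut t
  | axK => exact axK _ _
  | axT => exact axT _
  | ax5 => exact ax5 _
  | axm hm => exact axm (hAx hm)
  | mp _ _ ih₁ ih₂ => exact mp ih₁ ih₂
  | nec _ ih => exact nec ih

theorem mp_of_taut (t : Tautology (imp A B)) (h : Prv Ax A) : Prv Ax B := mp (taut t) h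

theorem mp₂_of_taut (t : Tautology (imp A (imp B C))) (hA : Prv Ax A) (hB : Prv Ax B) :
    Prv Ax C :=
  mp (mp_of_taut t hA) hB

theorem imp_refl (A : Fml) : Prv Ax (imp A A) :=
  taut fun v => by simp [imp, evalProp]

theorem imp_trans (h₁ : Prv Ax (imp A B)) (h₂ : Prv Ax (imp B C)) : Prv Ax (imp A C) :=
  mp₂_of_taut (fun v => by simp only [imp, evalProp]; grind) h₁ h₂

theorem imp_mp (h₁ : Prv Ax (imp X (imp A B))) (h₂ : Prv Ax (imp X A)) : Prv Ax (imp X B) :=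
  mp₂_of_taut (fun v => by simp only [imp, evalProp]; grind) h₁ h₂

theorem imp_and (h₁ : Prv Ax (imp X A)) (h₂ : Prv Ax (imp X B)) :
    Prv Ax (imp X (Fml.and A B)) :=
  mp₂_of_taut (fun v => by simp only [imp, evalProp]; grind) h₁ h₂

theorem fst_imp (h : Prv Ax (imp A C)) : Prv Ax (imp (Fml.and A B) C) :=
  mp_of_taut (fun v => by simp only [imp, evalProp]; grind) h

theorem snd_imp (h : Prv Ax (imp B C)) : Prv Ax (imp (Fml.and A B) C) :=
  mp_of_taut (fun v => by simp only [imp, evalProp]; grind) h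

theorem and_imp_and {A' B' : Fml} (hA : Prv Ax (imp A A')) (hB : Prv Ax (imp B B')) :
    Prv Ax (imp (Fml.and A B) (Fml.and A' B')) :=
  imp_and (fst_imp hA) (snd_imp hB)

theorem contrapose (h : Prv Ax (imp A B)) : Prv Ax (imp (neg B) (neg A)) :=
  mp_of_taut (fun v => by simp only [imp, evalProp]; grind) h

theorem box_mono (h : Prv Ax (imp A B)) : Prv Ax (imp (box A) (box B)) :=
  mp (axK A B) (nec h)

end Prv

theorem not_consistent_of_imp_of_imp_neg {Ax : Set Fml} {θ A : Fml} (h₁ : Prv Ax (imp θ A))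
    (h₂ : Prv Ax (imp θ (neg A))) : ¬ Consistent (Ax ∪ {θ}) := fun hc =>
  have hθ : Prv (Ax ∪ {θ}) θ := Prv.axm (Or.inr rfl)
  hc (Prv.mp₂_of_taut (fun v => by simp only [imp, evalProp, Fml.bot]; grind)
    (Prv.mono Set.subset_union_left h₁ |>.mp hθ) (Prv.mono Set.subset_union_left h₂ |>.mp hθ))

section S5

variable {Ax : Set Fml} {A B X : Fml}

theorem prv_imp_dia (A : Fml) : Prv Ax (imp A (dia A)) :=
  Prv.mp_of_taut (fun v => by simp only [imp, dia, evalProp]; grind) (Prv.axT (neg A))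

theorem prv_imp_box_of_dia_imp (h : Prv Ax (imp (dia X) X)) : Prv Ax (imp X (box X)) :=
  (prv_imp_dia X).imp_trans ((Prv.ax5 X).imp_trans (Prv.box_mono h))

theorem prv_dia_neg_imp_neg_of_imp_box (h : Prv Ax (imp X (box X))) :
    Prv Ax (imp (dia (neg X)) (neg X)) :=
  have hX : Prv Ax (imp X (box (neg (neg X)))) :=
    h.imp_trans (Prv.box_mono (Prv.taut fun v => by simp only [imp, evalProp]; grind))
  Prv.mp_of_taut (fun v => by simp only [imp, dia, evalProp]; grind) hX

theorem prv_neg_dia_imp_box (A : Fml) : Prv Ax (imp (neg (dia A)) (box (neg (dia A)))) :=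
  prv_imp_box_of_dia_imp (prv_dia_neg_imp_neg_of_imp_box (Prv.ax5 A))

theorem prv_and_imp_box (hA : Prv Ax (imp A (box A))) (hB : Prv Ax (imp B (box B))) :
    Prv Ax (imp (Fml.and A B) (box (Fml.and A B))) :=
  have hpair : Prv Ax (imp (box A) (box (imp B (Fml.and A B)))) :=
    Prv.box_mono (Prv.taut fun v => by simp only [imp, evalProp]; grind)
  Prv.imp_mp ((Prv.fst_imp hA).imp_trans (hpair.imp_trans (Prv.axK _ _))) (Prv.snd_imp hB)

theorem Prv.imp_box_of_imp (hX : Prv Ax (imp X (box X))) (h : Prv Ax (imp X A)) :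
    Prv Ax (imp X (box A)) :=
  hX.imp_trans (Prv.box_mono h)

theorem prv_imp_neg_box_of_imp_dia (hX : Prv Ax (imp X (box X))) (hB : Prv Ax (imp X (dia B)))
    (h : Prv Ax (imp (Fml.and B X) (neg A))) : Prv Ax (imp X (neg (box A))) :=
  have hK : Prv Ax (imp X (imp (box A) (box (neg B)))) :=
    (hX.imp_box_of_imp (Prv.mp_of_taut (fun v => by simp only [imp, evalProp]; grind) h)).imp_trans
      (Prv.axK _ _)
  Prv.mp₂_of_taut (fun v => by simp only [imp, dia, evalProp]; grind) hK hB

end S5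

section Layers

variable {Ax : Set Fml} {x : ℕ}

theorem chi_zero (x : ℕ) : chi 0 x = tt x := rfl
theorem chi_one (x : ℕ) : chi 1 x = ff x := rfl
theorem chi_two (x : ℕ) : chi 2 x = Nf x := rfl

theorem isNFormula_one_iff (φ : Fml) : IsNFormula 1 φ ↔ vars φ ⊆ {1} := by
  have : {x : ℕ | 1 ≤ x ∧ x ≤ 1} = {1} :=
    Set.ext fun _ => ⟨fun h => le_antisymm h.2 h.1, fun h => ⟨h.ge, h.le⟩⟩
  rw [IsNFormula, this]

theorem vars_chi (k : Fin 3) (x : ℕ) : vars (chi k x) = {x} := by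
  fin_cases k <;> simp [chi, Nf, vars]

theorem prv_chi_imp_neg_tt (hCon : ConAx ⊆ Ax) {k : Fin 3} (hk : k ≠ 0) :
    Prv Ax (imp (chi k x) (neg (tt x))) := by
  fin_cases k
  · exact absurd rfl hk
  · show Prv Ax (imp (ff x) (neg (tt x)))
    exact Prv.mp_of_taut (fun v => by simp only [imp, evalProp]; grind) (Prv.axm (hCon ⟨x, rfl⟩))
  · show Prv Ax (imp (Nf x) (neg (tt x)))
    exact Prv.taut fun v => by simp only [imp, Nf, evalProp]; grind

theorem prv_chi_imp_neg_ff (hCon : ConAx ⊆ Ax) {k : Fin 3} (hk : k ≠ 1) :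
    Prv Ax (imp (chi k x) (neg (ff x))) := by
  fin_cases k
  · show Prv Ax (imp (tt x) (neg (ff x)))
    exact Prv.mp_of_taut (fun v => by simp only [imp, evalProp]; grind) (Prv.axm (hCon ⟨x, rfl⟩))
  · exact absurd rfl hk
  · show Prv Ax (imp (Nf x) (neg (ff x)))
    exact Prv.taut fun v => by simp only [imp, Nf, evalProp]; grind

theorem exists_prv_imp_chi {ε : Fml}
    (hT : Prv Ax (imp ε (tt x)) ∨ Prv Ax (imp ε (neg (tt x))))
    (hF : Prv Ax (imp ε (ff x)) ∨ Prv Ax (imp ε (neg (ff x)))) :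
    ∃ k, Prv Ax (imp ε (chi k x)) := by
  rcases hT with hT | hT
  · exact ⟨0, hT⟩
  rcases hF with hF | hF
  · exact ⟨1, hF⟩
  · exact ⟨2, Prv.imp_and hT hF⟩

theorem Prv.imp_of_forall_chi {X A : Fml} (h : ∀ k, Prv Ax (imp (Fml.and (chi k x) X) A)) :
    Prv Ax (imp X A) :=
  have t : Tautology (imp (imp (Fml.and (chi 0 x) X) A)
      (imp (imp (Fml.and (chi 1 x) X) A) (imp (imp (Fml.and (chi 2 x) X) A) (imp X A)))) :=
    fun v => by simp only [imp, chi_zero, chi_one, chi_two, Nf, evalProp]; grind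
  (Prv.mp₂_of_taut t (h 0) (h 1)).mp (h 2)

end Layers

section PreIsolator

variable {Ax : Set Fml} {S : Finset (Fin 3)} {x : ℕ} {k : Fin 3}

def layerLit (S : Finset (Fin 3)) (x : ℕ) (k : Fin 3) : Fml :=
  if k ∈ S then dia (chi k x) else neg (dia (chi k x))

/-- `preIsolator 1 S`, with the variable made a parameter and the conjuncts in a fixed order. -/
def preIsolator₁ (S : Finset (Fin 3)) (x : ℕ) : Fml :=
  Fml.and (layerLit S x 0) (Fml.and (layerLit S x 1) (layerLit S x 2))

theorem prv_preIsolator₁_imp_layerLit (k : Fin 3) :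
    Prv Ax (imp (preIsolator₁ S x) (layerLit S x k)) := by
  fin_cases k
  · exact Prv.fst_imp (Prv.imp_refl _)
  · exact Prv.snd_imp (Prv.fst_imp (Prv.imp_refl _))
  · exact Prv.snd_imp (Prv.snd_imp (Prv.imp_refl _))

theorem prv_imp_preIsolator₁ {X : Fml} (h : ∀ k, Prv Ax (imp X (layerLit S x k))) :
    Prv Ax (imp X (preIsolator₁ S x)) :=
  Prv.imp_and (h 0) (Prv.imp_and (h 1) (h 2))

theorem prv_preIsolator₁_imp_dia (hk : k ∈ S) :
    Prv Ax (imp (preIsolator₁ S x) (dia (chi k x))) := by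
  simpa [layerLit, hk] using prv_preIsolator₁_imp_layerLit (Ax := Ax) (S := S) (x := x) k

theorem prv_preIsolator₁_imp_neg_dia (hk : k ∉ S) :
    Prv Ax (imp (preIsolator₁ S x) (neg (dia (chi k x)))) := by
  simpa [layerLit, hk] using prv_preIsolator₁_imp_layerLit (Ax := Ax) (S := S) (x := x) k

theorem prv_preIsolator₁_imp_neg_chi (hk : k ∉ S) :
    Prv Ax (imp (preIsolator₁ S x) (neg (chi k x))) :=
  (prv_preIsolator₁_imp_neg_dia hk).imp_trans (Prv.contrapose (prv_imp_dia _))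

theorem prv_preIsolator₁_imp_box : Prv Ax (imp (preIsolator₁ S x) (box (preIsolator₁ S x))) := by
  have hlit (k : Fin 3) : Prv Ax (imp (layerLit S x k) (box (layerLit S x k))) := by
    by_cases hk : k ∈ S
    · simpa [layerLit, hk] using Prv.ax5 (Ax := Ax) (chi k x)
    · simpa [layerLit, hk] using prv_neg_dia_imp_box (Ax := Ax) (chi k x)
  exact prv_and_imp_box (hlit 0) (prv_and_imp_box (hlit 1) (hlit 2))

theorem prv_chi_and_preIsolator₁_imp (hk : k ∉ S) (A : Fml) :
    Prv Ax (imp (Fml.and (chi k x) (preIsolator₁ S x)) A) :=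
  Prv.mp_of_taut (fun v => by simp only [imp, evalProp]; grind)
    (prv_preIsolator₁_imp_neg_chi (x := x) hk)

theorem exists_prv_imp_preIsolator₁ {ι : Fml}
    (h : ∀ k, Prv Ax (imp ι (dia (chi k x))) ∨ Prv Ax (imp ι (neg (dia (chi k x))))) :
    ∃ S, Prv Ax (imp ι (preIsolator₁ S x)) := by
  classical
  refine ⟨Finset.univ.filter fun k => Prv Ax (imp ι (dia (chi k x))), prv_imp_preIsolator₁ ?_⟩
  intro k
  by_cases hk : Prv Ax (imp ι (dia (chi k x)))
  · simp [layerLit, hk]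
  · simpa [layerLit, hk] using (h k).resolve_left hk

theorem prv_preIsolator₁_imp_of_not_ground (hGround : GroundAx ⊆ Ax) (h0 : 0 ∈ S) (h1 : 1 ∈ S)
    (h2 : 2 ∉ S) (A : Fml) : Prv Ax (imp (preIsolator₁ S x) A) :=
  have hN : Prv Ax (imp (preIsolator₁ S x) (dia (chi 2 x))) :=
    (Prv.imp_and (prv_preIsolator₁_imp_dia h0) (prv_preIsolator₁_imp_dia h1)).imp_trans
      (Prv.axm (hGround ⟨x, rfl⟩))
  Prv.mp₂_of_taut (fun v => by simp only [imp, evalProp]; grind) hN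
    (prv_preIsolator₁_imp_neg_dia (x := x) h2)

end PreIsolator

section LayerModel

variable (S : Finset (Fin 3))

def layerT : ℕ → Set S := fun _ => {w | w.1 = 0}

def layerF : ℕ → Set S := fun _ => {w | w.1 = 1}

theorem conC_layer : ConC (layerT S) (layerF S) := fun _ =>
  Set.eq_empty_iff_forall_notMem.2 fun _ ⟨h0, h1⟩ => absurd (h0.symm.trans h1) (by decide)

theorem groundC_layer (hS : 0 ∈ S → 1 ∈ S → 2 ∈ S) : GroundC (layerT S) (layerF S) := by
  rintro x ⟨⟨_, h0⟩, rfl⟩ ⟨⟨_, h1⟩, rfl⟩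
  exact ⟨⟨2, hS h0 h1⟩, by simp [layerT, layerF]⟩

end LayerModel

section TruthLemma

variable {Ax : Set Fml} {S : Finset (Fin 3)} {x : ℕ}

theorem truth_lemma (hCon : ConAx ⊆ Ax) {φ : Fml} (hφ : vars φ ⊆ {x}) (w : S) :
    (Sat (layerT S) (layerF S) w φ →
      Prv Ax (imp (Fml.and (chi w x) (preIsolator₁ S x)) φ)) ∧
    (¬ Sat (layerT S) (layerF S) w φ →
      Prv Ax (imp (Fml.and (chi w x) (preIsolator₁ S x)) (neg φ))) := by
  induction φ generalizing w with
  | tt y =>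
    obtain rfl : y = x := Set.singleton_subset_singleton.1 hφ
    refine ⟨fun h => ?_, fun h => Prv.fst_imp (prv_chi_imp_neg_tt hCon h)⟩
    rw [show (w : Fin 3) = 0 from h]
    exact Prv.fst_imp (Prv.imp_refl _)
  | ff y =>
    obtain rfl : y = x := Set.singleton_subset_singleton.1 hφ
    refine ⟨fun h => ?_, fun h => Prv.fst_imp (prv_chi_imp_neg_ff hCon h)⟩
    rw [show (w : Fin 3) = 1 from h]
    exact Prv.fst_imp (Prv.imp_refl _)
  | neg φ ih =>
    refine ⟨fun h => (ih hφ w).2 h, fun h => (ih hφ w).1 (not_not.1 h) |>.imp_trans ?_⟩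
    exact Prv.taut fun v => by simp only [imp, evalProp]; grind
  | and φ ψ ihφ ihψ =>
    obtain ⟨hφ', hψ'⟩ := Set.union_subset_iff.1 hφ
    refine ⟨fun h => Prv.imp_and ((ihφ hφ' w).1 h.1) ((ihψ hψ' w).1 h.2), fun h => ?_⟩
    by_cases h' : Sat (layerT S) (layerF S) w φ
    · exact ((ihψ hψ' w).2 fun h'' => h ⟨h', h''⟩).imp_trans
        (Prv.taut fun v => by simp only [imp, evalProp]; grind)
    · exact ((ihφ hφ' w).2 h').imp_trans (Prv.taut fun v => by simp only [imp, evalProp]; grind)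
  | box φ ih =>
    constructor
    · intro h
      have hψ : Prv Ax (imp (preIsolator₁ S x) φ) := Prv.imp_of_forall_chi (x := x) fun j => by
        by_cases hj : j ∈ S
        · exact (ih hφ ⟨j, hj⟩).1 (h _)
        · exact prv_chi_and_preIsolator₁_imp hj φ
      exact Prv.snd_imp (prv_preIsolator₁_imp_box.imp_box_of_imp hψ)
    · intro h
      obtain ⟨⟨j, hj⟩, hv⟩ := not_forall.1 h
      exact Prv.snd_imp (prv_imp_neg_box_of_imp_dia prv_preIsolator₁_imp_box
        (prv_preIsolator₁_imp_dia hj) ((ih hφ ⟨j, hj⟩).2 hv))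

end TruthLemma

/-- every 1-isolator for S5[Con,Ground] is satisfied at some
world of some model whose variable assignment satisfies the Con and Ground
constraints. -/
theorem isolator_satisfiable (φ : Fml) (h : Isolator 1 (ConAx ∪ GroundAx) φ) :
    ∃ (W : Type) (V1 V2 : ℕ → Set W) (w : W),
      ConC V1 V2 ∧ GroundC V1 V2 ∧ Sat V1 V2 w φ := by
  obtain ⟨ε, ι, ⟨-, ⟨-, hε1⟩, hε⟩, ⟨-, ⟨-, hι1⟩, hι⟩, rfl, hcons⟩ := h
  rw [isNFormula_one_iff] at hε1 hι1
  obtain ⟨e, hεe⟩ := exists_prv_imp_chi (x := 1)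
    (hε _ ⟨trivial, (isNFormula_one_iff _).2 subset_rfl⟩)
    (hε _ ⟨trivial, (isNFormula_one_iff _).2 subset_rfl⟩)
  obtain ⟨S, hιS⟩ := exists_prv_imp_preIsolator₁ (x := 1) fun k =>
    hι _ ⟨trivial, (isNFormula_one_iff _).2 (vars_chi k 1).subset⟩
  have hrefute : ¬ Prv (ConAx ∪ GroundAx)
      (imp (Fml.and (chi e 1) (preIsolator₁ S 1)) (neg (Fml.and ε ι))) := fun hneg =>
    not_consistent_of_imp_of_imp_neg (Prv.imp_refl _)
      ((Prv.and_imp_and hεe hιS).imp_trans hneg) hcons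
  have he : e ∈ S := by
    by_contra he
    exact hrefute (prv_chi_and_preIsolator₁_imp he _)
  have hS : 0 ∈ S → 1 ∈ S → 2 ∈ S := fun h0 h1 => by
    by_contra h2
    exact hrefute
      (Prv.snd_imp (prv_preIsolator₁_imp_of_not_ground Set.subset_union_right h0 h1 h2 _))
  refine ⟨S, layerT S, layerF S, ⟨e, he⟩, conC_layer S, groundC_layer S hS, ?_⟩
  by_contra hsat
  exact hrefute ((truth_lemma Set.subset_union_left (Set.union_subset hε1 hι1) ⟨e, he⟩).2 hsat)

end KripkeModal
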